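/- Characterization Theorem: for any class K of graphs, Mod qId K = D I P^fin_sps K; that is, a graph satisfies all quasi-identities holding in K if and only if it is a directed union of isomorphic copies of finite strong pointed subproducts of members of K. In particular, a class of graphs is a graph quasivariety if and only if it is closed under directed unions of isomorphic copies of finite strong pointed subproducts. -/

import Mathlib

open Classical

/-- A graph `(V, E)`: an ambient type `U`, a set `verts ⊆ U` of vertices and an
edge relation `Edge ⊆ verts × verts`. -/
structure GGraph : Type 1 where
  U : Type
  verts : Set U
  Edge : U → U → Prop
  edge_mem : ∀ a b, Edge a b → a ∈ verts ∧ b ∈ verts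

namespace GGraph

/-- The induced subgraph of `G` on a set `S`. -/
def induce (G : GGraph) (S : Set G.U) : GGraph where
  U := G.U
  verts := G.verts ∩ S
  Edge a b := G.Edge a b ∧ a ∈ S ∧ b ∈ S
  edge_mem a b h := ⟨⟨(G.edge_mem a b h.1).1, h.2.1⟩, (G.edge_mem a b h.1).2, h.2.2⟩

/-- The set of vertices reachable from `a` by a directed walk (including `a` itself). -/
def reachSet (G : GGraph) (a : G.U) : Set G.U := {b | Relation.ReflTransGen G.Edge a b}

/-- The subgraph of `G` induced by the set of vertices reachable from `a`. -/
def reachSub (G : GGraph) (a : G.U) : GGraph := G.induce (G.reachSet a)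

/-- A graph is undirected if its edge relation is symmetric. -/
def Undirected (G : GGraph) : Prop := ∀ a b, G.Edge a b → G.Edge b a

end GGraph

/-- A homomorphism of graphs: maps vertices to vertices and edges to edges. -/
def IsHom (G H : GGraph) (f : G.U → H.U) : Prop :=
  (∀ a ∈ G.verts, f a ∈ H.verts) ∧ ∀ a b, G.Edge a b → H.Edge (f a) (f b)

/-- A strong homomorphism: additionally maps non-edges to non-edges. -/
def IsStrongHom (G H : GGraph) (f : G.U → H.U) : Prop :=
  IsHom G H f ∧ ∀ a ∈ G.verts, ∀ b ∈ G.verts, ¬ G.Edge a b → ¬ H.Edge (f a) (f b)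

/-- Isomorphism of graphs. -/
def IsIsomorphic (G H : GGraph) : Prop :=
  ∃ f : G.U → H.U, Set.BijOn f G.verts H.verts ∧
    ∀ a ∈ G.verts, ∀ b ∈ G.verts, (G.Edge a b ↔ H.Edge (f a) (f b))

/-- Terms of type (2,0) over a variable set `X`: variables, the constant `∞`,
and a binary operation (juxtaposition). -/
inductive GTerm (X : Type) : Type
  | var : X → GTerm X
  | inf : GTerm X
  | app : GTerm X → GTerm X → GTerm X

namespace GTerm

/-- The set of variables occurring in a term. -/
def vars {X : Type} : GTerm X → Set X
  | var x => {x}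
  | inf => ∅
  | app t₁ t₂ => t₁.vars ∪ t₂.vars

/-- A term is nontrivial if it contains no occurrence of `∞`. -/
def Nontrivial {X : Type} : GTerm X → Prop
  | var _ => True
  | inf => False
  | app t₁ t₂ => t₁.Nontrivial ∧ t₂.Nontrivial

/-- The leftmost variable of a term (`none` for the bare constant `∞` on the left). -/
def leftVar {X : Type} : GTerm X → Option X
  | var x => some x
  | inf => none
  | app t₁ _ => t₁.leftVar

/-- The edge set of the term graph `G(t)`. -/
def edges {X : Type} : GTerm X → Set (X × X)
  | var _ => ∅
  | inf => ∅
  | app t₁ t₂ =>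
      t₁.edges ∪ t₂.edges ∪
        {p | ∃ x y, t₁.leftVar = some x ∧ t₂.leftVar = some y ∧ p = (x, y)}

theorem vars_finite {X : Type} (t : GTerm X) : t.vars.Finite := by
  induction t with
  | var x => simpa [vars] using Set.finite_singleton x
  | inf => simpa [vars] using Set.finite_empty
  | app t₁ t₂ ih₁ ih₂ => simpa [vars] using ih₁.union ih₂

end GTerm

/-- The term graph `G(t)` of a term `t`: vertices are the variables of `t`. -/
def termGraph {X : Type} (t : GTerm X) : GGraph where
  U := X
  verts := t.vars
  Edge a b := (a, b) ∈ t.edges ∧ a ∈ t.vars ∧ b ∈ t.vars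
  edge_mem a b h := ⟨h.2.1, h.2.2⟩

/-- Evaluation of a term in the graph algebra `A(G)`; `none` plays the role of `∞`:
`x · y = x` if `(x,y)` is an edge, and `∞` otherwise. -/
noncomputable def GGraph.eval (G : GGraph) {X : Type} (h : X → Option G.U) :
    GTerm X → Option G.U
  | .var x => h x
  | .inf => none
  | .app t₁ t₂ =>
      match G.eval h t₁, G.eval h t₂ with
      | some a, some b => if G.Edge a b then some a else none
      | _, _ => none

/-- Identities: pairs of terms. -/
abbrev GId (X : Type) := GTerm X × GTerm X

/-- An assignment takes values in `V(G) ∪ {∞}`. -/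
def GGraph.Assign (G : GGraph) {X : Type} (h : X → Option G.U) : Prop :=
  ∀ x a, h x = some a → a ∈ G.verts

/-- The assignment `h` makes the identity `e` true in `A(G)`. -/
def GGraph.SatIdWith (G : GGraph) {X : Type} (h : X → Option G.U) (e : GId X) : Prop :=
  G.eval h e.1 = G.eval h e.2

/-- `G` satisfies the identity `e`. -/
def GGraph.SatId (G : GGraph) {X : Type} (e : GId X) : Prop :=
  ∀ h : X → Option G.U, G.Assign h → G.SatIdWith h e

/-- An implication (quasi-identity) over the standard countably infinite
variable set `ℕ`: a finite set of identities (the premise) and an identity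
(the consequence). -/
structure Imp : Type where
  prem : Set (GId ℕ)
  concl : GId ℕ
  prem_fin : prem.Finite

/-- `G` satisfies the implication `imp`. -/
def GGraph.SatImp (G : GGraph) (imp : Imp) : Prop :=
  ∀ h : ℕ → Option G.U, G.Assign h →
    (∀ e ∈ imp.prem, G.SatIdWith h e) → G.SatIdWith h imp.concl

/-- The implications satisfied by every member of a class `K` of graphs. -/
def qId (K : Set GGraph) : Set Imp := {imp | ∀ G ∈ K, G.SatImp imp}

/-- The class of graphs satisfying every implication of `Sg`. -/
def ModI (Sg : Set Imp) : Set GGraph := {G | ∀ imp ∈ Sg, G.SatImp imp}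

/-- The finite members of `ModI Sg`. -/
def ModIf (Sg : Set Imp) : Set GGraph := {G | G ∈ ModI Sg ∧ G.verts.Finite}

/-- The pointed graph `G^⊥`: a new vertex `⊥ = none` with edges from `⊥` to all
vertices, including a loop at `⊥`. -/
def GGraph.pointed (G : GGraph) : GGraph where
  U := Option G.U
  verts := insert none (some '' G.verts)
  Edge a b := b ∈ insert none (some '' G.verts) ∧
    (a = none ∨ ∃ u v, a = some u ∧ b = some v ∧ G.Edge u v)
  edge_mem a b h := by
    refine ⟨?_, h.1⟩
    rcases h.2 with rfl | ⟨u, v, rfl, rfl, huv⟩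
    · exact Set.mem_insert _ _
    · exact Set.mem_insert_of_mem _ ⟨u, (G.edge_mem u v huv).1, rfl⟩

/-- Direct product of a family of graphs (componentwise edges). -/
def gProd {I : Type} (G : I → GGraph) : GGraph where
  U := (i : I) → (G i).U
  verts := {a | ∀ i, a i ∈ (G i).verts}
  Edge a b := ∀ i, (G i).Edge (a i) (b i)
  edge_mem a b h :=
    ⟨fun i => ((G i).edge_mem _ _ (h i)).1, fun i => ((G i).edge_mem _ _ (h i)).2⟩

/-- The pointed product `∏ i, (G i)^⊥` of a family of graphs. -/
def pointedProd {I : Type} (G : I → GGraph) : GGraph := gProd fun i => (G i).pointed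

/-- `W` is a strong pointed subproduct of the family `G`:
(1) `W` is an induced subgraph of the pointed product;
(2) every vertex has nonempty support;
(3) for every vertex `a` and every `k` in the support of `a`, the projection `p k`
restricted to `reach_W(a)` is a strong homomorphism into `G k`. -/
def IsSPSofFam {I : Type} (G : I → GGraph) (W : GGraph) : Prop :=
  ∃ S : Set (pointedProd G).U,
    W = (pointedProd G).induce S ∧
    (∀ a ∈ ((pointedProd G).induce S).verts, ∃ i, a i ≠ none) ∧
    (∀ a ∈ ((pointedProd G).induce S).verts, ∀ k : I, a k ≠ none →
      (∀ b ∈ (((pointedProd G).induce S).reachSub a).verts, b k ≠ none) ∧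
      (∀ b ∈ (((pointedProd G).induce S).reachSub a).verts,
        ∀ u, b k = some u → u ∈ (G k).verts) ∧
      (∀ b ∈ (((pointedProd G).induce S).reachSub a).verts,
       ∀ c ∈ (((pointedProd G).induce S).reachSub a).verts,
        ∀ u v, b k = some u → c k = some v →
          ((((pointedProd G).induce S).reachSub a).Edge b c ↔ (G k).Edge u v)))

/-- The class of all strong pointed subproducts of families of members of `K`. -/
def Psps (K : Set GGraph) : Set GGraph :=
  {W | ∃ (I : Type) (G : I → GGraph), (∀ i, G i ∈ K) ∧ IsSPSofFam G W}

/-- The finite members of `Psps K`. -/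
def PspsFin (K : Set GGraph) : Set GGraph := {W | W ∈ Psps K ∧ W.verts.Finite}

/-- Isomorphic copies of members of a class of graphs. -/
def Icl (C : Set GGraph) : Set GGraph := {W | ∃ V ∈ C, IsIsomorphic V W}

/-- `W` is the union of a directed family of members of `C` (the members of the
family are induced subgraphs of a common member, pairwise). -/
def IsDirUnionOf (W : GGraph) (C : Set GGraph) : Prop :=
  ∃ (ι : Type) (V : ι → Set W.U) (E : ι → W.U → W.U → Prop)
    (hmem : ∀ i, ∀ a b, E i a b → a ∈ V i ∧ b ∈ V i),
    (∀ i, GGraph.mk W.U (V i) (E i) (hmem i) ∈ C) ∧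
    (∀ i j, ∃ k,
      (V i ⊆ V k ∧ ∀ a b, E i a b ↔ E k a b ∧ a ∈ V i ∧ b ∈ V i) ∧
      (V j ⊆ V k ∧ ∀ a b, E j a b ↔ E k a b ∧ a ∈ V j ∧ b ∈ V j)) ∧
    W.verts = ⋃ i, V i ∧
    ∀ a b, W.Edge a b ↔ ∃ i, E i a b

/-- The class of all directed unions of members of `C`. -/
def DCl (C : Set GGraph) : Set GGraph := {W | IsDirUnionOf W C}

/-- Condition (a) of Proposition `IPK-ab`. -/
def CondA (K : Set GGraph) (W : GGraph) : Prop :=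
  ∀ a ∈ W.verts, ∃ Ga ∈ K, ∃ φ : W.U → Ga.U, IsStrongHom (W.reachSub a) Ga φ

/-- Condition (b) of Proposition `IPK-ab`. -/
def CondB (K : Set GGraph) (W : GGraph) : Prop :=
  ∀ a ∈ W.verts, ∀ a' ∈ W.verts, a ≠ a' → W.reachSet a = W.reachSet a' →
    ∃ Gp ∈ K, ∃ φ : W.U → Gp.U, IsStrongHom (W.reachSub a) Gp φ ∧ φ a ≠ φ a'

/-- The identities `x_a x_b ≈ x_a` for edges `(a,b)` of `G` (variables are the
vertices of `G`). -/
def GammaE (G : GGraph) : Set (GId G.U) :=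
  {e | ∃ a b, G.Edge a b ∧ e = (GTerm.app (GTerm.var a) (GTerm.var b), GTerm.var a)}

/-- The identities `x_a x_b ≈ ∞` for non-edges `(a,b)` of `G`. -/
def GammaN (G : GGraph) : Set (GId G.U) :=
  {e | ∃ a b, a ∈ G.verts ∧ b ∈ G.verts ∧ ¬ G.Edge a b ∧
    e = (GTerm.app (GTerm.var a) (GTerm.var b), GTerm.inf)}

/-- `Σ(G) = Γ_e(G) ∪ Γ_n(G)`. -/
def SigmaIds (G : GGraph) : Set (GId G.U) := GammaE G ∪ GammaN G

theorem SigmaIds_finite (G : GGraph) (hfin : G.verts.Finite) : (SigmaIds G).Finite := by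
  classical
  have hsub : SigmaIds G ⊆
      (fun p : G.U × G.U =>
        if G.Edge p.1 p.2 then
          (GTerm.app (GTerm.var p.1) (GTerm.var p.2), GTerm.var p.1)
        else (GTerm.app (GTerm.var p.1) (GTerm.var p.2), GTerm.inf)) ''
        (G.verts ×ˢ G.verts) := by
    rintro e (⟨a, b, hab, rfl⟩ | ⟨a, b, ha, hb, hnab, rfl⟩)
    · exact ⟨(a, b), Set.mk_mem_prod (G.edge_mem a b hab).1 (G.edge_mem a b hab).2,
        by simp [hab]⟩
    · exact ⟨(a, b), Set.mk_mem_prod ha hb, by simp [hnab]⟩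
  exact ((hfin.prod hfin).image _).subset hsub


/-!
A quasi-identity of `K` holds in a strong pointed subproduct `W`: for a vertex `a` and a
coordinate `k` in its support, the projection `p_k`, restricted to `reach(a)` and sending the
rest to `∞`, commutes with evaluation, and these projections separate the vertices of `W` and `∞`.
Quasi-identities are preserved by isomorphic copies and, as each one mentions finitely many
variables, by directed unions.

Conversely, a model `W` of `qId K` is the directed union of its finite induced subgraphs, which are
models too. In a finite model the quasi-identities `Σ(reach(a)) → x_a ≈ ∞` and
`Σ(reach(a)) → x_a ≈ x_a'` fail, so they fail in members of `K`: this gives strong homomorphisms of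
each `reach(a)` into members of `K`, separating `a` from any `a' ≠ a` with the same reach set.
Placed side by side, with `⊥` outside `reach(a)`, they embed `W` as a strong pointed subproduct.
-/

namespace GGraph

variable {G : GGraph}

theorem mem_reachSet_self (a : G.U) : a ∈ G.reachSet a := Relation.ReflTransGen.refl

theorem mem_reachSet_of_edge {a b c : G.U} (hb : b ∈ G.reachSet a) (hbc : G.Edge b c) :
    c ∈ G.reachSet a :=
  Relation.ReflTransGen.tail hb hbc

theorem reachSet_subset {a b : G.U} (hb : b ∈ G.reachSet a) : G.reachSet b ⊆ G.reachSet a :=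
  fun _ hc => Relation.ReflTransGen.trans hb hc

theorem reachSet_subset_verts {a : G.U} (ha : a ∈ G.verts) : G.reachSet a ⊆ G.verts := by
  intro b hb
  induction hb with
  | refl => exact ha
  | tail _ hbc _ => exact (G.edge_mem _ _ hbc).2

end GGraph

theorem IsStrongHom.edge_iff {G H : GGraph} {φ : G.U → H.U} (hφ : IsStrongHom G H φ)
    {a b : G.U} (ha : a ∈ G.verts) (hb : b ∈ G.verts) : G.Edge a b ↔ H.Edge (φ a) (φ b) :=
  ⟨hφ.1.2 a b, not_imp_not.1 (hφ.2 a ha b hb)⟩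

theorem IsStrongHom.reachSub_of_mem {W G : GGraph} {φ : W.U → G.U} {a b : W.U}
    (hφ : IsStrongHom (W.reachSub a) G φ) (hb : b ∈ W.reachSet a) :
    IsStrongHom (W.reachSub b) G φ := by
  have hsub : ∀ {c}, c ∈ W.reachSet b → c ∈ W.reachSet a := fun hc => W.reachSet_subset hb hc
  refine ⟨⟨fun c hc => hφ.1.1 c ⟨hc.1, hsub hc.2⟩, fun c d hcd => ?_⟩, ?_⟩
  · exact hφ.1.2 c d ⟨hcd.1, hsub hcd.2.1, hsub hcd.2.2⟩
  · intro c hc d hd hncd hcd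
    exact hφ.2 c ⟨hc.1, hsub hc.2⟩ d ⟨hd.1, hsub hd.2⟩ (fun h => hncd ⟨h.1, hc.2, hd.2⟩) hcd

theorem isStrongHom_induce_id (G : GGraph) (S : Set G.U) : IsStrongHom (G.induce S) G id :=
  ⟨⟨fun _ ha => ha.1, fun _ _ h => h.1⟩, fun _ ha _ hb hn h => hn ⟨h, ha.2, hb.2⟩⟩

namespace GTerm

def rename {X Y : Type} (g : X → Y) : GTerm X → GTerm Y
  | var x => var (g x)
  | inf => inf
  | app t₁ t₂ => app (t₁.rename g) (t₂.rename g)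

end GTerm

namespace GGraph

variable {G H : GGraph} {X : Type}

theorem eval_app (h : X → Option G.U) (t₁ t₂ : GTerm X) :
    G.eval h (.app t₁ t₂) = (G.eval h t₁).bind fun a =>
      (G.eval h t₂).bind fun b => if G.Edge a b then some a else none := by
  rw [eval]
  rcases G.eval h t₁ <;> rcases G.eval h t₂ <;> rfl

@[simp] theorem eval_var (h : X → Option G.U) (x : X) : G.eval h (.var x) = h x := rfl

@[simp] theorem eval_inf (h : X → Option G.U) : G.eval h .inf = none := rfl

theorem exists_eq_of_eval_eq_some {h : X → Option G.U} {t : GTerm X} {a : G.U}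
    (ht : G.eval h t = some a) : ∃ x, h x = some a := by
  induction t with
  | var x => exact ⟨x, ht⟩
  | inf => cases ht
  | app t₁ t₂ ih₁ _ =>
    simp only [eval_app, Option.bind_eq_some_iff, Option.ite_none_right_eq_some,
      Option.some.injEq] at ht
    obtain ⟨b, hb, c, -, -, rfl⟩ := ht
    exact ih₁ hb

theorem eval_congr {h h' : X → Option G.U} {t : GTerm X} (hhh' : ∀ x ∈ t.vars, h x = h' x) :
    G.eval h t = G.eval h' t := by
  induction t with
  | var x => exact hhh' x rfl
  | inf => rfl
  | app t₁ t₂ ih₁ ih₂ =>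
    rw [eval_app, eval_app, ih₁ fun x hx => hhh' x (Or.inl hx),
      ih₂ fun x hx => hhh' x (Or.inr hx)]

theorem eval_rename {Y : Type} (h : Y → Option G.U) (g : X → Y) (t : GTerm X) :
    G.eval h (t.rename g) = G.eval (h ∘ g) t := by
  induction t with
  | var x => rfl
  | inf => rfl
  | app t₁ t₂ ih₁ ih₂ => rw [GTerm.rename, eval_app, eval_app, ih₁, ih₂]

theorem satIdWith_rename {Y : Type} (h : Y → Option G.U) (g : X → Y) (e : GId X) :
    G.SatIdWith h (e.1.rename g, e.2.rename g) ↔ G.SatIdWith (h ∘ g) e := by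
  rw [SatIdWith, SatIdWith, eval_rename, eval_rename]

/-- On the values `T` of the assignment, the domain of `f` is closed under out-edges and `f` is a
strong homomorphism on it. -/
theorem eval_bind {h : X → Option G.U} {T : Set G.U} (hT : ∀ x a, h x = some a → a ∈ T)
    (f : G.U → Option H.U)
    (hf : ∀ a ∈ T, ∀ b ∈ T, ∀ u, f a = some u → (G.Edge a b ↔ ∃ v, f b = some v ∧ H.Edge u v))
    (t : GTerm X) : H.eval (fun x => (h x).bind f) t = (G.eval h t).bind f := by
  induction t with
  | var x => rfl
  | inf => rfl
  | app t₁ t₂ ih₁ ih₂ =>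
    rw [eval_app, eval_app, ih₁, ih₂]
    rcases h₁ : G.eval h t₁ with _ | a
    · rfl
    rcases h₂ : G.eval h t₂ with _ | b
    · cases f a <;> simp
    obtain ⟨x, hx⟩ := exists_eq_of_eval_eq_some h₁
    obtain ⟨y, hy⟩ := exists_eq_of_eval_eq_some h₂
    rcases hfa : f a with _ | u
    · by_cases hab : G.Edge a b <;> simp [hab, hfa]
    have hab := hf a (hT x a hx) b (hT y b hy) u hfa
    rcases hfb : f b with _ | v
    · simp_all
    · simp only [hfb, Option.some.injEq, exists_eq_left'] at hab
      by_cases he : G.Edge a b <;> simp [he, hfa, hfb, ← hab]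

end GGraph

def GGraph.SatImpAt (G : GGraph) (h : ℕ → Option G.U) (imp : Imp) : Prop :=
  (∀ e ∈ imp.prem, G.SatIdWith h e) → G.SatIdWith h imp.concl

def Imp.vars (imp : Imp) : Set ℕ :=
  (imp.concl.1.vars ∪ imp.concl.2.vars) ∪ ⋃ e ∈ imp.prem, (e.1.vars ∪ e.2.vars)

theorem Imp.vars_finite (imp : Imp) : imp.vars.Finite :=
  (imp.concl.1.vars_finite.union imp.concl.2.vars_finite).union
    (imp.prem_fin.biUnion fun e _ => e.1.vars_finite.union e.2.vars_finite)

namespace GGraph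

variable {G H : GGraph} {imp : Imp}

theorem satImpAt_congr {h h' : ℕ → Option G.U} (hhh' : ∀ x ∈ imp.vars, h x = h' x) :
    G.SatImpAt h imp ↔ G.SatImpAt h' imp := by
  have hid : ∀ e : GId ℕ, e.1.vars ∪ e.2.vars ⊆ imp.vars →
      (G.SatIdWith h e ↔ G.SatIdWith h' e) := fun e he => by
    rw [SatIdWith, SatIdWith, eval_congr fun x hx => hhh' x (he (Or.inl hx)),
      eval_congr fun x hx => hhh' x (he (Or.inr hx))]
  refine forall₂_congr (fun e he => hid e ?_) |>.imp (hid _ Set.subset_union_left)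
  exact Set.subset_union_of_subset_right
    (Set.subset_biUnion_of_mem (u := fun e : GId ℕ => e.1.vars ∪ e.2.vars) he) _

theorem satImp_of_verts_eq_empty (hG : G.verts = ∅) (imp : Imp) : G.SatImp imp := by
  have hnone : ∀ h : ℕ → Option G.U, G.Assign h → ∀ t : GTerm ℕ, G.eval h t = none :=
    fun h hh t => Option.eq_none_iff_forall_ne_some.2 fun a ht =>
      let ⟨x, hx⟩ := exists_eq_of_eval_eq_some ht
      (hG ▸ hh x a hx : a ∈ (∅ : Set G.U))
  intro h hh _
  rw [SatIdWith, hnone h hh, hnone h hh]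

theorem satImpAt_of_embedding (hH : H.SatImp imp) {h : ℕ → Option G.U} {T : Set G.U}
    (hT : ∀ x a, h x = some a → a ∈ T) (f : G.U → H.U) (hmaps : Set.MapsTo f T H.verts)
    (hinj : Set.InjOn f T) (hedge : ∀ a ∈ T, ∀ b ∈ T, G.Edge a b ↔ H.Edge (f a) (f b)) :
    G.SatImpAt h imp := by
  have hmap : ∀ t, H.eval (fun x => (h x).map f) t = (G.eval h t).map f := by
    simpa only [← Option.map_eq_bind] using
      eval_bind hT (some ∘ f) fun a ha b hb u hu => by
        simp only [Function.comp_apply, Option.some.injEq] at hu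
        simp [hedge a ha b hb, hu]
  have hval : ∀ t a, G.eval h t = some a → a ∈ T := fun t a ht =>
    let ⟨x, hx⟩ := exists_eq_of_eval_eq_some ht
    hT x a hx
  have hassign : H.Assign fun x => (h x).map f := by
    intro x u hu
    obtain ⟨a, ha, rfl⟩ := Option.map_eq_some_iff.1 hu
    exact hmaps (hT x a ha)
  intro hprem
  have hconcl := hH _ hassign fun e he => by
    rw [SatIdWith, hmap, hmap, hprem e he]
  rw [SatIdWith, hmap, hmap] at hconcl
  rcases hs : G.eval h imp.concl.1 with _ | a <;> rcases ht : G.eval h imp.concl.2 with _ | b <;>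
    simp only [hs, ht, Option.map_none, Option.map_some, reduceCtorEq,
      Option.some.injEq] at hconcl
  · exact hs.trans ht.symm
  · rw [SatIdWith, hs, ht, hinj (hval _ a hs) (hval _ b ht) hconcl]

end GGraph

theorem mem_modI_of_embedding {Sg : Set Imp} {G H : GGraph} (hH : H ∈ ModI Sg)
    (f : G.U → H.U) (hmaps : Set.MapsTo f G.verts H.verts) (hinj : Set.InjOn f G.verts)
    (hedge : ∀ a ∈ G.verts, ∀ b ∈ G.verts, G.Edge a b ↔ H.Edge (f a) (f b)) : G ∈ ModI Sg :=
  fun imp himp _ hh => GGraph.satImpAt_of_embedding (hH imp himp) hh f hmaps hinj hedge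

theorem mem_modI_induce {Sg : Set Imp} {W : GGraph} (hW : W ∈ ModI Sg) (F : Set W.U) :
    W.induce F ∈ ModI Sg :=
  mem_modI_of_embedding hW id (fun _ ha => ha.1) (Set.injOn_id _)
    fun _ ha _ hb => ⟨And.left, fun h => ⟨h, ha.2, hb.2⟩⟩

theorem mem_modI_of_isIsomorphic {Sg : Set Imp} {V W : GGraph} (hV : V ∈ ModI Sg)
    (hVW : IsIsomorphic V W) : W ∈ ModI Sg := by
  obtain ⟨f, hbij, hedge⟩ := hVW
  cases isEmpty_or_nonempty V.U
  · have hW : W.verts = ∅ := by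
      rw [← hbij.image_eq, Set.eq_empty_of_isEmpty V.verts, Set.image_empty]
    exact fun imp _ => W.satImp_of_verts_eq_empty hW imp
  have hinv := hbij.invOn_invFunOn
  have hbij' := Set.BijOn.symm hinv.symm hbij
  refine mem_modI_of_embedding hV _ hbij'.mapsTo hbij'.injOn fun a ha b hb => ?_
  rw [hedge _ (hbij'.mapsTo ha) _ (hbij'.mapsTo hb), hinv.2 ha, hinv.2 hb]

theorem mem_modI_of_isDirUnionOf {Sg : Set Imp} {C : Set GGraph} (hC : C ⊆ ModI Sg)
    {W : GGraph} (hW : IsDirUnionOf W C) : W ∈ ModI Sg := by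
  obtain ⟨ι, V, E, hmem, hVC, hdir, hverts, hedge⟩ := hW
  intro imp himp h hh
  cases isEmpty_or_nonempty ι
  · exact W.satImp_of_verts_eq_empty (by simp [hverts]) imp h hh
  let h' : ℕ → Option W.U := fun x => if x ∈ imp.vars then h x else none
  show W.SatImpAt h imp
  rw [W.satImpAt_congr (h' := h') fun x hx => (if_pos hx).symm]
  let T : Set W.U := some ⁻¹' (h '' imp.vars)
  have hT : ∀ x a, h' x = some a → a ∈ T := fun x a hx => by
    by_cases hxv : x ∈ imp.vars
    · exact ⟨x, hxv, by simpa [h', hxv] using hx⟩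
    · simp [h', hxv] at hx
  have hTfin : T.Finite := (imp.vars_finite.image h).preimage (Option.some_injective _).injOn
  obtain ⟨k, hTk⟩ : ∃ k, T ⊆ V k := by
    have hV : Directed (· ⊆ ·) V := fun i j =>
      let ⟨k, hik, hjk⟩ := hdir i j
      ⟨k, hik.1, hjk.1⟩
    simpa using hV.exists_mem_subset_of_finset_subset_biUnion (s := hTfin.toFinset) <| by
      intro a ha
      obtain ⟨x, -, hx⟩ := hTfin.mem_toFinset.1 ha
      simpa [← hverts] using hh x a hx
  have hEk : ∀ a ∈ V k, ∀ b ∈ V k, W.Edge a b ↔ E k a b := fun a ha b hb => by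
    refine ⟨fun hab => ?_, fun hab => (hedge a b).2 ⟨k, hab⟩⟩
    obtain ⟨i, hi⟩ := (hedge a b).1 hab
    obtain ⟨j, ⟨-, hij⟩, -, hkj⟩ := hdir i k
    exact (hkj a b).2 ⟨((hij a b).1 hi).1, ha, hb⟩
  exact W.satImpAt_of_embedding (hC (hVC k) imp himp) hT id hTk (Set.injOn_id T)
    fun a ha b hb => hEk a (hTk ha) b (hTk hb)

section PointedSubproduct

variable {I : Type} {G : I → GGraph} {S : Set (pointedProd G).U}

local notation "𝒲" => GGraph.induce (pointedProd G) S

variable (S) in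
/-- The projection `p_k` of condition (3), restricted to `reach(a)`, as a partial map. -/
noncomputable def reachProj (a : (𝒲).U) (k : I) (c : (𝒲).U) :
    Option (G k).U :=
  if c ∈ (𝒲).reachSet a then c k else none

theorem reachProj_eq_some {a c : (𝒲).U} {k : I} {u : (G k).U} :
    reachProj S a k c = some u ↔ c ∈ (𝒲).reachSet a ∧ c k = some u := by
  unfold reachProj
  split_ifs with hc
  · simp only [hc, true_and]
    exact Iff.rfl
  · simp [hc]

/-- The hypotheses are condition (3) for `a` and `k`. -/
theorem eval_reachProj {a : (𝒲).U} {k : I}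
    (hne : ∀ b ∈ ((𝒲).reachSub a).verts, b k ≠ none)
    (hmem : ∀ b ∈ ((𝒲).reachSub a).verts, ∀ u, b k = some u → u ∈ (G k).verts)
    (hedge : ∀ b ∈ ((𝒲).reachSub a).verts, ∀ c ∈ ((𝒲).reachSub a).verts,
      ∀ u v, b k = some u → c k = some v → (((𝒲).reachSub a).Edge b c ↔ (G k).Edge u v))
    {h : ℕ → Option (𝒲).U} (hh : (𝒲).Assign h) :
    (G k).Assign (fun x => (h x).bind (reachProj S a k)) ∧
      ∀ t, (G k).eval (fun x => (h x).bind (reachProj S a k)) t =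
        ((𝒲).eval h t).bind (reachProj S a k) := by
  refine ⟨fun x u hu => ?_, GGraph.eval_bind hh _ fun b hb c hc u hbu => ?_⟩
  · obtain ⟨b, hb, hbu⟩ := Option.bind_eq_some_iff.1 hu
    obtain ⟨hba, hbk⟩ := reachProj_eq_some.1 hbu
    exact hmem b ⟨hh x b hb, hba⟩ u hbk
  obtain ⟨hba, hbk⟩ := reachProj_eq_some.1 hbu
  constructor
  · intro hbc
    have hca := (𝒲).mem_reachSet_of_edge hba hbc
    obtain ⟨v, hcv⟩ := Option.ne_none_iff_exists'.1 (hne c ⟨hc, hca⟩)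
    exact ⟨v, reachProj_eq_some.2 ⟨hca, hcv⟩,
      (hedge b ⟨hb, hba⟩ c ⟨hc, hca⟩ u v hbk hcv).1 ⟨hbc, hba, hca⟩⟩
  · rintro ⟨v, hcv, huv⟩
    obtain ⟨hca, hck⟩ := reachProj_eq_some.1 hcv
    exact ((hedge b ⟨hb, hba⟩ c ⟨hc, hca⟩ u v hbk hck).2 huv).1

theorem exists_eq_some_of_reachProj_eq (hsupp : ∀ a ∈ (𝒲).verts, ∃ i, a i ≠ none)
    {a : (𝒲).U} (ha : a ∈ (𝒲).verts) {o : Option (𝒲).U}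
    (hproj : ∀ k, a k ≠ none → o.bind (reachProj S a k) = reachProj S a k a) :
    ∃ b, o = some b ∧ b ∈ (𝒲).reachSet a ∧ ∀ k, a k ≠ none → b k = a k := by
  have hself : ∀ k, reachProj S a k a = a k := fun k => if_pos ((𝒲).mem_reachSet_self a)
  obtain ⟨k₀, hk₀⟩ := hsupp a ha
  obtain ⟨u, hu⟩ := Option.ne_none_iff_exists'.1 hk₀
  obtain ⟨b, rfl, hb⟩ := Option.bind_eq_some_iff.1 ((hproj k₀ hk₀).trans ((hself k₀).trans hu))
  have hba := (reachProj_eq_some.1 hb).1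
  refine ⟨b, rfl, hba, fun k hk => ?_⟩
  exact (if_pos hba).symm.trans ((hproj k hk).trans (hself k))

theorem eq_of_forall_reachProj_eq (hsupp : ∀ a ∈ (𝒲).verts, ∃ i, a i ≠ none)
    {o₁ o₂ : Option (𝒲).U} (h₁ : ∀ a, o₁ = some a → a ∈ (𝒲).verts)
    (h₂ : ∀ a, o₂ = some a → a ∈ (𝒲).verts)
    (hproj : ∀ a ∈ (𝒲).verts, ∀ k, a k ≠ none →
      o₁.bind (reachProj S a k) = o₂.bind (reachProj S a k)) :
    o₁ = o₂ := by
  rcases o₁ with _ | a <;> rcases o₂ with _ | b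
  · rfl
  · obtain ⟨_, h, -⟩ := exists_eq_some_of_reachProj_eq hsupp (h₂ b rfl)
      fun k hk => hproj b (h₂ b rfl) k hk
    cases h
  · obtain ⟨_, h, -⟩ := exists_eq_some_of_reachProj_eq hsupp (h₁ a rfl)
      fun k hk => (hproj a (h₁ a rfl) k hk).symm
    cases h
  · obtain ⟨_, ⟨⟩, -, hab⟩ := exists_eq_some_of_reachProj_eq hsupp (h₁ a rfl)
      fun k hk => (hproj a (h₁ a rfl) k hk).symm
    obtain ⟨_, ⟨⟩, -, hba⟩ := exists_eq_some_of_reachProj_eq hsupp (h₂ b rfl)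
      fun k hk => hproj b (h₂ b rfl) k hk
    congr 1
    funext k
    by_cases ha : a k = none
    · by_cases hb : b k = none
      · rw [ha, hb]
      · exact hba k hb
    · exact (hab k ha).symm

end PointedSubproduct

theorem mem_modI_qId_of_mem_Psps {K : Set GGraph} {W : GGraph} (hW : W ∈ Psps K) :
    W ∈ ModI (qId K) := by
  obtain ⟨I, G, hGK, S, rfl, hsupp, hstrong⟩ := hW
  intro imp himp h hh hprem
  have hval : ∀ t a, ((pointedProd G).induce S).eval h t = some a →
      a ∈ ((pointedProd G).induce S).verts := fun t a ht =>
    let ⟨x, hx⟩ := GGraph.exists_eq_of_eval_eq_some ht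
    hh x a hx
  refine eq_of_forall_reachProj_eq hsupp (hval _) (hval _) fun a ha k hk => ?_
  obtain ⟨hne, hmem, hedge⟩ := hstrong a ha k hk
  obtain ⟨hh', heval⟩ := eval_reachProj hne hmem hedge hh
  have := himp (G k) (hGK k) _ hh' fun e he => by
    rw [GGraph.SatIdWith, heval, heval, hprem e he]
  rwa [GGraph.SatIdWith, heval, heval] at this

namespace GGraph

variable {R G : GGraph}

theorem satIdWith_sigmaIds_iff_isStrongHom {h : R.U → Option G.U} (hh : G.Assign h)
    {φ : R.U → G.U} (hφ : ∀ u ∈ R.verts, h u = some (φ u)) :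
    (∀ e ∈ SigmaIds R, G.SatIdWith h e) ↔ IsStrongHom R G φ := by
  have hval : ∀ u ∈ R.verts, ∀ v ∈ R.verts, G.eval h (.app (.var u) (.var v)) =
      if G.Edge (φ u) (φ v) then some (φ u) else none := fun u hu v hv => by
    simp [eval_app, hφ u hu, hφ v hv]
  constructor
  · intro hsig
    refine ⟨⟨fun u hu => hh u (φ u) (hφ u hu), fun u v huv => ?_⟩, fun u hu v hv hnuv => ?_⟩
    · have huv' := hsig _ (Or.inl ⟨u, v, huv, rfl⟩)
      rw [SatIdWith, hval u (R.edge_mem u v huv).1 v (R.edge_mem u v huv).2] at huv'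
      by_contra hn
      simp [hn, hφ u (R.edge_mem u v huv).1] at huv'
    · have huv' := hsig _ (Or.inr ⟨u, v, hu, hv, hnuv, rfl⟩)
      rw [SatIdWith, hval u hu v hv] at huv'
      intro he
      simp [he] at huv'
  · rintro hφs e (⟨u, v, huv, rfl⟩ | ⟨u, v, hu, hv, hnuv, rfl⟩)
    · obtain ⟨hu, hv⟩ := R.edge_mem u v huv
      simp [SatIdWith, hval u hu v hv, hφs.1.2 u v huv, hφ u hu]
    · simp [SatIdWith, hval u hu v hv, hφs.2 u hu v hv hnuv]

theorem ne_none_of_satIdWith_sigmaIds_reachSub {W : GGraph} {a : W.U} {h : W.U → Option G.U}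
    (hsig : ∀ e ∈ SigmaIds (W.reachSub a), G.SatIdWith h e) (ha : h a ≠ none) :
    ∀ u ∈ W.reachSet a, h u ≠ none := by
  intro u hu
  induction hu with
  | refl => exact ha
  | @tail b c hb hbc ih =>
    have hbc' : G.SatIdWith h (.app (.var b) (.var c), .var b) :=
      hsig _ (Or.inl ⟨b, c, ⟨hbc, hb, W.mem_reachSet_of_edge hb hbc⟩, rfl⟩)
    intro hc
    simp only [SatIdWith, eval_app, eval_var, hc, Option.bind_none, Option.bind_fun_none] at hbc'
    exact ih hbc'.symm

theorem exists_isStrongHom_of_satIdWith_sigmaIds {W : GGraph} {a : W.U}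
    {h : W.U → Option G.U} (hh : G.Assign h)
    (hsig : ∀ e ∈ SigmaIds (W.reachSub a), G.SatIdWith h e) (ha : h a ≠ none) :
    ∃ φ, IsStrongHom (W.reachSub a) G φ ∧ ∀ u ∈ W.reachSet a, h u = some (φ u) := by
  obtain ⟨c, -⟩ := Option.ne_none_iff_exists'.1 ha
  have hφ : ∀ u ∈ W.reachSet a, h u = some ((h u).getD c) := fun u hu =>
    (Option.getD_of_ne_none (ne_none_of_satIdWith_sigmaIds_reachSub hsig ha u hu) c).symm
  exact ⟨_, (satIdWith_sigmaIds_iff_isStrongHom (R := W.reachSub a) hh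
    fun u hu => hφ u hu.2).1 hsig, hφ⟩

end GGraph

/-- `hK` puts the quasi-identity `Σ(reach(a)) → ε`, renamed into `ℕ` along an injection of the
finite set `W.verts`, into `qId K`; it is applied in `W` to the inclusion of `reach(a)`. -/
theorem exists_satIdWith_of_mem_modI_qId {K : Set GGraph} {W : GGraph}
    (hfin : W.verts.Finite) (hW : W ∈ ModI (qId K)) (a : W.U) (ε : GId W.U)
    (hK : ∀ G ∈ K, ∀ h : W.U → Option G.U, G.Assign h →
      (∀ e ∈ SigmaIds (W.reachSub a), G.SatIdWith h e) → G.SatIdWith h ε) :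
    ∃ h : W.U → Option W.U, (∀ u ∈ (W.reachSub a).verts, h u = some u) ∧ W.SatIdWith h ε := by
  have : Nonempty W.U := ⟨a⟩
  obtain ⟨g, hg⟩ := Set.countable_iff_exists_injOn.1 hfin.countable
  have hrg : Set.LeftInvOn (Function.invFunOn g W.verts) g W.verts := hg.leftInvOn_invFunOn
  let rename : GId W.U → GId ℕ := fun e => (e.1.rename g, e.2.rename g)
  let imp : Imp := ⟨rename '' SigmaIds (W.reachSub a), rename ε,
    (SigmaIds_finite (W.reachSub a) (hfin.subset Set.inter_subset_left)).image _⟩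
  have himp : imp ∈ qId K := fun G hG h hh hprem =>
    (G.satIdWith_rename h g ε).2 <| hK G hG (h ∘ g) (fun u => hh (g u)) fun e he =>
      (G.satIdWith_rename h g e).1 (hprem _ ⟨e, he, rfl⟩)
  let ι : W.U → Option W.U := fun u => if u ∈ (W.reachSub a).verts then some u else none
  have hι : W.Assign ι := fun u c hc => by
    simp only [ι, Option.ite_none_right_eq_some] at hc
    exact Option.some.inj hc.2 ▸ hc.1.1
  have hιg : ∀ u : W.U, u ∈ (W.reachSub a).verts →
      (ι ∘ Function.invFunOn g W.verts ∘ g) u = some u :=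
    fun u hu => by simp [ι, hrg hu.1, hu]
  refine ⟨_, hιg, (W.satIdWith_rename _ g ε).1 <| hW imp himp _ (fun n => hι _) ?_⟩
  rintro _ ⟨e, he, rfl⟩
  refine (W.satIdWith_rename _ g e).2 <| ((W.satIdWith_sigmaIds_iff_isStrongHom
    (R := W.reachSub a) (fun u => hι _) hιg).2 ?_) e he
  exact isStrongHom_induce_id W _

section FiniteModel

variable {K : Set GGraph} {W : GGraph}

theorem condA_of_mem_modI_qId (hfin : W.verts.Finite) (hW : W ∈ ModI (qId K)) : CondA K W := by
  intro a ha
  by_contra hno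
  push Not at hno
  obtain ⟨h, hh, hε⟩ := exists_satIdWith_of_mem_modI_qId hfin hW a (.var a, .inf)
    fun G hG h hGh hsig => by
      by_contra hne
      obtain ⟨φ, hφ, -⟩ := GGraph.exists_isStrongHom_of_satIdWith_sigmaIds hGh hsig hne
      exact hno G hG φ hφ
  have : h a = none := hε
  simp [hh a ⟨ha, W.mem_reachSet_self a⟩] at this

theorem condB_of_mem_modI_qId (hfin : W.verts.Finite) (hW : W ∈ ModI (qId K)) : CondB K W := by
  intro a ha a' ha' hne hreach
  by_contra hno
  push Not at hno
  have ha'a : a' ∈ W.reachSet a := hreach ▸ W.mem_reachSet_self a'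
  have haa' : a ∈ W.reachSet a' := hreach ▸ W.mem_reachSet_self a
  obtain ⟨h, hh, hε⟩ := exists_satIdWith_of_mem_modI_qId hfin hW a (.var a, .var a')
    fun G hG h hGh hsig => by
      show h a = h a'
      by_cases hna : h a = none
      · have hsig' : ∀ e ∈ SigmaIds (W.reachSub a'), G.SatIdWith h e := by
          unfold GGraph.reachSub
          rwa [← hreach]
        by_contra hne'
        exact GGraph.ne_none_of_satIdWith_sigmaIds_reachSub hsig'
          (fun ha' => hne' (hna.trans ha'.symm)) a haa' hna
      · obtain ⟨φ, hφ, hφh⟩ := GGraph.exists_isStrongHom_of_satIdWith_sigmaIds hGh hsig hna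
        rw [hφh a (W.mem_reachSet_self a), hφh a' ha'a, hno G hG φ hφ]
  have : h a = h a' := hε
  rw [hh a ⟨ha, W.mem_reachSet_self a⟩, hh a' ⟨ha', ha'a⟩] at this
  exact hne (Option.some.inj this)

end FiniteModel

section InducedImage

variable {W H : GGraph} {e : W.U → H.U}

theorem reachSet_induce_image
    (hedge : ∀ u ∈ W.verts, ∀ v ∈ W.verts, W.Edge u v ↔ H.Edge (e u) (e v))
    {w : W.U} (hw : w ∈ W.verts) :
    (H.induce (e '' W.verts)).reachSet (e w) = e '' W.reachSet w := by
  apply Set.Subset.antisymm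
  · intro b hb
    induction hb with
    | refl => exact ⟨w, W.mem_reachSet_self w, rfl⟩
    | tail _ hbc ih =>
      obtain ⟨y, hy, rfl⟩ := ih
      obtain ⟨z, hz, rfl⟩ := hbc.2.2
      exact ⟨z, W.mem_reachSet_of_edge hy
        ((hedge y (W.reachSet_subset_verts hw hy) z hz).2 hbc.1), rfl⟩
  · rintro _ ⟨y, hy, rfl⟩
    induction hy with
    | refl => exact Relation.ReflTransGen.refl
    | @tail y z hy hyz ih =>
      have hyW := W.reachSet_subset_verts hw hy
      have hzW := (W.edge_mem y z hyz).2
      exact Relation.ReflTransGen.tail ih ⟨(hedge y hyW z hzW).1 hyz, ⟨y, hyW, rfl⟩, ⟨z, hzW, rfl⟩⟩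

theorem isIsomorphic_induce_image [Nonempty W.U] (hmaps : Set.MapsTo e W.verts H.verts)
    (hinj : Set.InjOn e W.verts)
    (hedge : ∀ u ∈ W.verts, ∀ v ∈ W.verts, W.Edge u v ↔ H.Edge (e u) (e v)) :
    IsIsomorphic (H.induce (e '' W.verts)) W := by
  have hverts : (H.induce (e '' W.verts)).verts = e '' W.verts :=
    Set.inter_eq_right.2 hmaps.image_subset
  have hbij := hinj.bijOn_image
  have hinv := hbij.invOn_invFunOn
  refine ⟨(Function.invFunOn e W.verts : H.U → W.U), ?_, ?_⟩
  · rw [hverts]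
    exact Set.BijOn.symm hinv.symm hbij
  · rintro _ hb _ hc
    obtain ⟨y, hy, rfl⟩ := hverts ▸ hb
    obtain ⟨z, hz, rfl⟩ := hverts ▸ hc
    rw [hinv.1 hy, hinv.1 hz, hedge y hy z hz]
    exact ⟨And.left, fun h => ⟨h, ⟨y, hy, rfl⟩, ⟨z, hz, rfl⟩⟩⟩

end InducedImage

/-- What makes `e` an isomorphism of `W` onto a strong pointed subproduct of `G`; `strong` is
condition (3), transported to `W`. -/
structure IsPointedEmbedding (W : GGraph) {I : Type} (G : I → GGraph)
    (e : W.U → (pointedProd G).U) : Prop where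
  injOn : Set.InjOn e W.verts
  edge_iff : ∀ u ∈ W.verts, ∀ v ∈ W.verts, W.Edge u v ↔ (pointedProd G).Edge (e u) (e v)
  support : ∀ w ∈ W.verts, ∃ i, e w i ≠ none
  strong : ∀ w ∈ W.verts, ∀ k, e w k ≠ none → ∃ ψ : W.U → (G k).U,
    IsStrongHom (W.reachSub w) (G k) ψ ∧ ∀ y ∈ W.reachSet w, e y k = some (ψ y)

namespace IsPointedEmbedding

variable {W : GGraph} {I : Type} {G : I → GGraph} {e : W.U → (pointedProd G).U}

theorem mapsTo (he : IsPointedEmbedding W G e) : Set.MapsTo e W.verts (pointedProd G).verts := by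
  intro w hw k
  by_cases hk : e w k = none
  · rw [hk]
    exact Set.mem_insert _ _
  · obtain ⟨ψ, hψ, hψe⟩ := he.strong w hw k hk
    rw [hψe w (W.mem_reachSet_self w)]
    exact Set.mem_insert_of_mem _ ⟨ψ w, hψ.1.1 w ⟨hw, W.mem_reachSet_self w⟩, rfl⟩

theorem isSPSofFam_induce_image (he : IsPointedEmbedding W G e) :
    IsSPSofFam G ((pointedProd G).induce (e '' W.verts)) := by
  refine ⟨_, rfl, fun b hb => ?_, fun b hb k hk => ?_⟩
  · obtain ⟨w, hw, rfl⟩ := hb.2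
    exact he.support w hw
  obtain ⟨w, hw, rfl⟩ := hb.2
  obtain ⟨ψ, hψ, hψe⟩ := he.strong w hw k hk
  have hreach : ∀ b : (pointedProd G).U,
      b ∈ (((pointedProd G).induce (e '' W.verts)).reachSub (e w)).verts →
      ∃ y : W.U, (y ∈ W.verts ∧ y ∈ W.reachSet w) ∧ b = e y := by
    rintro b ⟨-, hb⟩
    obtain ⟨y, hy, rfl⟩ : b ∈ e '' W.reachSet w := reachSet_induce_image he.edge_iff hw ▸ hb
    exact ⟨y, ⟨W.reachSet_subset_verts hw hy, hy⟩, rfl⟩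
  refine ⟨fun b hb => ?_, fun b hb u hu => ?_, fun b hb c hc u v hu hv => ?_⟩
  · obtain ⟨y, hy, rfl⟩ := hreach b hb
    exact fun h => Option.some_ne_none (ψ y) ((hψe y hy.2).symm.trans h)
  · obtain ⟨y, hy, rfl⟩ := hreach b hb
    rw [hψe y hy.2] at hu
    exact Option.some.inj hu ▸ hψ.1.1 y hy
  · obtain ⟨y, hy, rfl⟩ := hreach b hb
    obtain ⟨z, hz, rfl⟩ := hreach c hc
    rw [hψe y hy.2] at hu
    rw [hψe z hz.2] at hv
    obtain rfl : ψ y = u := Option.some.inj hu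
    obtain rfl : ψ z = v := Option.some.inj hv
    rw [← hψ.edge_iff hy hz]
    constructor
    · exact fun h => ⟨(he.edge_iff y hy.1 z hz.1).2 h.1.1, hy.2, hz.2⟩
    · exact fun h => ⟨⟨(he.edge_iff y hy.1 z hz.1).1 h.1, hb.1.2, hc.1.2⟩, hb.2, hc.2⟩

theorem mem_Icl_PspsFin [Nonempty W.U] {K : Set GGraph} (hGK : ∀ i, G i ∈ K)
    (hfin : W.verts.Finite) (he : IsPointedEmbedding W G e) : W ∈ Icl (PspsFin K) :=
  ⟨_, ⟨⟨I, G, hGK, he.isSPSofFam_induce_image⟩, (hfin.image e).subset Set.inter_subset_right⟩,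
    isIsomorphic_induce_image he.mapsTo he.injOn he.edge_iff⟩

end IsPointedEmbedding

section ReachEmbedding

variable {W : GGraph} {I : Type} {G : I → GGraph} {base : I → W.U} {φ : ∀ i, W.U → (G i).U}

variable (base φ) in
noncomputable def reachEmbedding (w : W.U) : (pointedProd G).U :=
  fun i => if w ∈ W.reachSet (base i) then some (φ i w) else none

theorem reachEmbedding_of_mem {w : W.U} {i : I} (hw : w ∈ W.reachSet (base i)) :
    reachEmbedding base φ w i = some (φ i w) :=
  if_pos hw

theorem mem_of_reachEmbedding_ne_none {w : W.U} {i : I} (hw : reachEmbedding base φ w i ≠ none) :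
    w ∈ W.reachSet (base i) :=
  not_not.1 fun h => hw (if_neg h)

theorem reachEmbedding_self {w : W.U} {i : I} (hi : base i = w) :
    reachEmbedding base φ w i = some (φ i w) :=
  reachEmbedding_of_mem (hi ▸ W.mem_reachSet_self _)

theorem reachEmbedding_self_ne_none {w : W.U} {i : I} (hi : base i = w) :
    reachEmbedding base φ w i ≠ none :=
  (reachEmbedding_self hi).trans_ne (Option.some_ne_none _)

theorem edge_iff_edge_reachEmbedding (hφ : ∀ i, IsStrongHom (W.reachSub (base i)) (G i) (φ i))
    (hdiag : ∀ w ∈ W.verts, ∃ i, base i = w) {u v : W.U} (hu : u ∈ W.verts) (hv : v ∈ W.verts) :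
    W.Edge u v ↔ (pointedProd G).Edge (reachEmbedding base φ u) (reachEmbedding base φ v) := by
  refine ⟨fun huv i => ⟨?_, ?_⟩, fun huv => ?_⟩
  · by_cases hv' : v ∈ W.reachSet (base i)
    · rw [reachEmbedding_of_mem hv']
      exact Set.mem_insert_of_mem _ ⟨φ i v, (hφ i).1.1 v ⟨hv, hv'⟩, rfl⟩
    · rw [show reachEmbedding base φ v i = none from if_neg hv']
      exact Set.mem_insert _ _
  · by_cases hu' : u ∈ W.reachSet (base i)
    · have hv' := W.mem_reachSet_of_edge hu' huv
      exact Or.inr ⟨φ i u, φ i v, reachEmbedding_of_mem hu', reachEmbedding_of_mem hv',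
        (hφ i).1.2 u v ⟨huv, hu', hv'⟩⟩
    · exact Or.inl (if_neg hu')
  · obtain ⟨i, rfl⟩ := hdiag u hu
    rcases (huv i).2 with h | ⟨x, y, hx, hy, hxy⟩
    · exact absurd h (reachEmbedding_self_ne_none rfl)
    have hv' := mem_of_reachEmbedding_ne_none (hy.trans_ne (Option.some_ne_none _))
    rw [reachEmbedding_self rfl] at hx
    rw [reachEmbedding_of_mem hv'] at hy
    obtain rfl := Option.some.inj hx
    obtain rfl := Option.some.inj hy
    exact ((hφ i).edge_iff ⟨hu, W.mem_reachSet_self _⟩ ⟨hv, hv'⟩).2 hxy |>.1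

theorem injOn_reachEmbedding (hdiag : ∀ w ∈ W.verts, ∃ i, base i = w)
    (hsep : ∀ u ∈ W.verts, ∀ v ∈ W.verts, u ≠ v → W.reachSet u = W.reachSet v →
      ∃ i, base i = u ∧ φ i u ≠ φ i v) :
    Set.InjOn (reachEmbedding base φ) W.verts := by
  have hreach : ∀ u ∈ W.verts, ∀ v, reachEmbedding base φ u = reachEmbedding base φ v →
      v ∈ W.reachSet u := fun u hu v huv => by
    obtain ⟨i, rfl⟩ := hdiag u hu
    exact mem_of_reachEmbedding_ne_none (congrFun huv i ▸ reachEmbedding_self_ne_none rfl)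
  intro u hu v hv huv
  by_contra hne
  have hr := Set.Subset.antisymm (W.reachSet_subset (hreach v hv u huv.symm))
    (W.reachSet_subset (hreach u hu v huv))
  obtain ⟨i, rfl, hi⟩ := hsep _ hu v hv hne hr
  have := congrFun huv i
  rw [reachEmbedding_self rfl, reachEmbedding_of_mem (hr ▸ W.mem_reachSet_self v)] at this
  exact hi (Option.some.inj this)

theorem isPointedEmbedding_reachEmbedding
    (hφ : ∀ i, IsStrongHom (W.reachSub (base i)) (G i) (φ i))
    (hdiag : ∀ w ∈ W.verts, ∃ i, base i = w)
    (hsep : ∀ u ∈ W.verts, ∀ v ∈ W.verts, u ≠ v → W.reachSet u = W.reachSet v →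
      ∃ i, base i = u ∧ φ i u ≠ φ i v) :
    IsPointedEmbedding W G (reachEmbedding base φ) where
  injOn := injOn_reachEmbedding hdiag hsep
  edge_iff _ hu _ hv := edge_iff_edge_reachEmbedding hφ hdiag hu hv
  support w hw :=
    let ⟨i, hi⟩ := hdiag w hw
    ⟨i, reachEmbedding_self_ne_none hi⟩
  strong _ _ k hk :=
    have hwk := mem_of_reachEmbedding_ne_none hk
    ⟨φ k, (hφ k).reachSub_of_mem hwk, fun _ hy => reachEmbedding_of_mem (W.reachSet_subset hwk hy)⟩

end ReachEmbedding

theorem mem_Icl_PspsFin_of_condA_condB {K : Set GGraph} {W : GGraph} [Nonempty W.U]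
    (hfin : W.verts.Finite) (hA : CondA K W) (hB : CondB K W) : W ∈ Icl (PspsFin K) := by
  let I := {p : W.U × W.U // p.1 ∈ W.verts ∧ p.2 ∈ W.verts ∧ W.reachSet p.1 = W.reachSet p.2}
  have H : ∀ p : I, ∃ Gp ∈ K, ∃ φ : W.U → Gp.U,
      IsStrongHom (W.reachSub p.1.1) Gp φ ∧ (p.1.1 ≠ p.1.2 → φ p.1.1 ≠ φ p.1.2) := by
    rintro ⟨⟨a, a'⟩, ha, ha', hr⟩
    by_cases haa' : a = a'
    · obtain ⟨Gp, hGp, φ, hφ⟩ := hA a ha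
      exact ⟨Gp, hGp, φ, hφ, absurd haa'⟩
    · obtain ⟨Gp, hGp, φ, hφ, hsep⟩ := hB a ha a' ha' haa' hr
      exact ⟨Gp, hGp, φ, hφ, fun _ => hsep⟩
  choose G hGK φ hφ hsep using H
  refine (isPointedEmbedding_reachEmbedding (base := fun p => p.1.1) hφ
    (fun w hw => ⟨⟨(w, w), hw, hw, rfl⟩, rfl⟩)
    fun u hu v hv huv hr => ⟨⟨(u, v), hu, hv, hr⟩, rfl, hsep _ huv⟩).mem_Icl_PspsFin hGK hfin

theorem isDirUnionOf_of_induce_mem {W : GGraph} {C : Set GGraph}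
    (hC : ∀ F : Set W.U, F.Finite → F.Nonempty → W.induce F ∈ C) : IsDirUnionOf W C := by
  refine ⟨{F : Set W.U // F.Finite ∧ F.Nonempty}, fun F => W.verts ∩ F.1,
    fun F a b => W.Edge a b ∧ a ∈ F.1 ∧ b ∈ F.1, fun F => (W.induce F.1).edge_mem,
    fun F => hC F.1 F.2.1 F.2.2, fun F F' => ?_, ?_, fun a b => ⟨fun h => ?_, fun ⟨_, h⟩ => h.1⟩⟩
  · have hsub : ∀ F'' : Set W.U, F'' ⊆ F.1 ∪ F'.1 →
        (W.verts ∩ F'' ⊆ W.verts ∩ (F.1 ∪ F'.1) ∧ ∀ a b, W.Edge a b ∧ a ∈ F'' ∧ b ∈ F'' ↔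
          (W.Edge a b ∧ a ∈ F.1 ∪ F'.1 ∧ b ∈ F.1 ∪ F'.1) ∧ a ∈ W.verts ∩ F'' ∧
            b ∈ W.verts ∩ F'') := fun F'' hF'' =>
      ⟨Set.inter_subset_inter_right _ hF'', fun a b =>
        ⟨fun h => ⟨⟨h.1, hF'' h.2.1, hF'' h.2.2⟩, ⟨(W.edge_mem a b h.1).1, h.2.1⟩,
          ⟨(W.edge_mem a b h.1).2, h.2.2⟩⟩, fun h => ⟨h.1.1, h.2.1.2, h.2.2.2⟩⟩⟩
    exact ⟨⟨F.1 ∪ F'.1, F.2.1.union F'.2.1, F.2.2.mono Set.subset_union_left⟩,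
      hsub F.1 Set.subset_union_left, hsub F'.1 Set.subset_union_right⟩
  · ext a
    refine ⟨fun ha => Set.mem_iUnion.2 ⟨⟨{a}, Set.finite_singleton a, Set.singleton_nonempty a⟩,
      ha, rfl⟩, fun ha => ?_⟩
    obtain ⟨_, hF⟩ := Set.mem_iUnion.1 ha
    exact hF.1
  · exact ⟨⟨{a, b}, (Set.finite_singleton b).insert a, Set.insert_nonempty a {b}⟩, h,
      Set.mem_insert a {b}, Set.mem_insert_of_mem a rfl⟩

theorem mem_Icl_PspsFin_of_mem_modI_qId {K : Set GGraph} {W : GGraph} [Nonempty W.U]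
    (hfin : W.verts.Finite) (hW : W ∈ ModI (qId K)) : W ∈ Icl (PspsFin K) :=
  mem_Icl_PspsFin_of_condA_condB hfin (condA_of_mem_modI_qId hfin hW)
    (condB_of_mem_modI_qId hfin hW)

/-- Characterization Theorem: `Mod qId K = D I P^fin_sps K`;
in particular, a class of graphs is a graph quasivariety iff it is closed under
directed unions of isomorphic copies of finite strong pointed subproducts. -/
theorem statement_11 (K : Set GGraph) :
    ModI (qId K) = DCl (Icl (PspsFin K)) ∧
    ((K = ModI (qId K)) ↔ DCl (Icl (PspsFin K)) ⊆ K) := by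
  have hchar : ModI (qId K) = DCl (Icl (PspsFin K)) := by
    refine Set.Subset.antisymm (fun W hW => isDirUnionOf_of_induce_mem fun F hF hne => ?_)
      fun W hW => mem_modI_of_isDirUnionOf ?_ hW
    · have : Nonempty (W.induce F).U := ⟨hne.some⟩
      exact mem_Icl_PspsFin_of_mem_modI_qId (hF.subset Set.inter_subset_right)
        (mem_modI_induce hW F)
    · rintro V ⟨V₀, ⟨hV₀, -⟩, hiso⟩
      exact mem_modI_of_isIsomorphic (mem_modI_qId_of_mem_Psps hV₀) hiso
  refine ⟨hchar, fun hK => hchar ▸ hK.symm.subset, fun hsub => ?_⟩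
  exact Set.Subset.antisymm (fun G hG imp himp => himp G hG) (hchar ▸ hsub)
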